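/- arXiv:2402.17640 — 2 statements merged into one kernel-verified Lean document; each statement's English description precedes it below -/
import Mathlib

section
/- If the set of names {a} ∪ S is prefix-free and a is nonempty, then for any namespace M, the set (S \ {a}) ∪ { a ++ m | m ∈ M } obtained by 'grafting' M at leaf a is again prefix-free (this is substitution of one namespace into a leaf of another). -/
def StrictPrefix (p n : List String) : Prop := ∃ s : List String, s ≠ [] ∧ n = p ++ s

def PrefixFree (N : Set (List String)) : Prop :=
  ∀ n ∈ N, ∀ n' ∈ N, ¬ StrictPrefix n n'

/-! A name of the grafted set either survives from `S` or has the form `a ++ m`. Two survivors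
are incomparable because `S` is prefix-free; a survivor cannot be comparable with `a ++ m`,
since then it would be comparable with `a` itself; `a ++ m` cannot be a prefix of a survivor,
since `a` would then be a strict prefix of it; and `a ++ m <+: a ++ m'` cancels to `m <+: m'`. -/

theorem strictPrefix_iff {p n : List String} : StrictPrefix p n ↔ p <+: n ∧ p ≠ n := by
  constructor
  · rintro ⟨s, hs, rfl⟩
    exact ⟨List.prefix_append p s, fun h => hs (by simpa using h)⟩
  · rintro ⟨⟨s, rfl⟩, hne⟩
    exact ⟨s, fun hs => hne (by simp [hs]), rfl⟩

theorem prefixFree_iff {N : Set (List String)} :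
    PrefixFree N ↔ ∀ x ∈ N, ∀ y ∈ N, x <+: y → x = y := by
  simp only [PrefixFree, strictPrefix_iff, not_and, not_not]

namespace PrefixFree

variable {N : Set (List String)}

theorem eq_of_isPrefix (h : PrefixFree N) {x y : List String} (hx : x ∈ N) (hy : y ∈ N)
    (hxy : x <+: y) : x = y :=
  prefixFree_iff.mp h x hx y hy hxy

theorem eq_of_isPrefix_of_isPrefix (h : PrefixFree N) {x y z : List String} (hx : x ∈ N)
    (hy : y ∈ N) (hxz : x <+: z) (hyz : y <+: z) : x = y := by
  rcases List.prefix_or_prefix_of_prefix hxz hyz with hxy | hyx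
  · exact h.eq_of_isPrefix hx hy hxy
  · exact (h.eq_of_isPrefix hy hx hyx).symm

end PrefixFree

theorem grafting_prefixFree_general
    (a : List String)
    (S : Set (List String)) (hS : PrefixFree ({a} ∪ S))
    (M : Set (List String)) (hM : PrefixFree M) :
    PrefixFree ((S \ {a}) ∪ {x | ∃ m ∈ M, x = a ++ m}) := by
  have haS : a ∈ {a} ∪ S := Or.inl rfl
  refine prefixFree_iff.mpr ?_
  rintro x (⟨hxS, hxa⟩ | ⟨m, hm, rfl⟩) y (⟨hyS, hya⟩ | ⟨m', hm', rfl⟩) hxy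
  · exact hS.eq_of_isPrefix (Or.inr hxS) (Or.inr hyS) hxy
  · exact absurd (hS.eq_of_isPrefix_of_isPrefix (Or.inr hxS) haS hxy (List.prefix_append a m'))
      hxa
  · exact absurd (hS.eq_of_isPrefix haS (Or.inr hyS)
      ((List.prefix_append a m).trans hxy)).symm hya
  · rw [hM.eq_of_isPrefix hm hm' ((List.prefix_append_right_inj a).mp hxy)]

theorem grafting_prefixFree
    (a : List String) (ha : a ≠ [])
    (S : Set (List String)) (hS : PrefixFree ({a} ∪ S))
    (M : Set (List String)) (hMfin : M.Finite) (hM : PrefixFree M) :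
    PrefixFree ((S \ {a}) ∪ {x | ∃ m ∈ M, x = a ++ m}) :=
  grafting_prefixFree_general a S hS M hM
end

section
/- Consider the isolated DC shunt motor dynamics (with q.e = E_const constant, p.f = 0): ḃ_s = E_const − R_s i_s, ḃ = E_const − b_s ω − R_r i_r, ṗ = b_s i_r − d_r ω, ṡ = (1/θ₀)(R_s i_s² + R_r i_r² + d_r ω²), where i_s = b_s/L_s, i_r = b/L_r, ω = p/J_r, with L_s, L_r, J_r, θ₀ > 0 and R_s, R_r, d_r ≥ 0. Then along any solution, the total energy E_tot = b_s²/(2L_s) + b²/(2L_r) + p²/(2J_r) + θ₀·s satisfies d/dt E_tot = E_const·(i_s + i_r), i.e., energy changes only by the electrical power supplied, and ṡ ≥ 0. -/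
/-!
The gyrator terms `b_s ω i_r` in `ḃ` and `ṗ` cancel in the time derivative of the stored energy, which
therefore equals the supplied power `E_const (i_s + i_r)` minus the dissipated power
`R_s i_s² + R_r i_r² + d_r ω²`; the environment absorbs exactly that dissipated power as heat `θ₀ ṡ`.
-/

theorem HasDerivAt.sq_div_two_mul {f : ℝ → ℝ} {f' t : ℝ} (hf : HasDerivAt f f' t) (c : ℝ) :
    HasDerivAt (fun τ => f τ ^ 2 / (2 * c)) (f t / c * f') t :=
  ((hf.fun_pow 2).div_const (2 * c)).congr_deriv (by field_simp; ring)

theorem motor_energy_balance_and_entropy_production_general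
    (L_s L_r J_r θ₀ : ℝ) (hθ₀ : 0 < θ₀)
    (R_s R_r d_r : ℝ) (hRs : 0 ≤ R_s) (hRr : 0 ≤ R_r) (hdr : 0 ≤ d_r)
    (E_const : ℝ)
    (b_s b p s : ℝ → ℝ) (t : ℝ)
    (hbs : HasDerivAt b_s (E_const - R_s * (b_s t / L_s)) t)
    (hb : HasDerivAt b (E_const - b_s t * (p t / J_r) - R_r * (b t / L_r)) t)
    (hp : HasDerivAt p (b_s t * (b t / L_r) - d_r * (p t / J_r)) t)
    (hs : HasDerivAt s ((1 / θ₀) * (R_s * (b_s t / L_s)^2 + R_r * (b t / L_r)^2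
        + d_r * (p t / J_r)^2)) t) :
    HasDerivAt (fun τ => b_s τ^2 / (2 * L_s) + b τ^2 / (2 * L_r) + p τ^2 / (2 * J_r)
        + θ₀ * s τ)
      (E_const * (b_s t / L_s + b t / L_r)) t ∧
    0 ≤ (1 / θ₀) * (R_s * (b_s t / L_s)^2 + R_r * (b t / L_r)^2 + d_r * (p t / J_r)^2) := by
  refine ⟨?_, by positivity⟩
  have hE := (((hbs.sq_div_two_mul L_s).add (hb.sq_div_two_mul L_r)).add
    (hp.sq_div_two_mul J_r)).add (hs.const_mul θ₀)
  refine hE.congr_deriv ?_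
  field_simp
  ring

theorem motor_energy_balance_and_entropy_production
    (L_s L_r J_r θ₀ : ℝ) (hLs : 0 < L_s) (hLr : 0 < L_r) (hJr : 0 < J_r) (hθ₀ : 0 < θ₀)
    (R_s R_r d_r : ℝ) (hRs : 0 ≤ R_s) (hRr : 0 ≤ R_r) (hdr : 0 ≤ d_r)
    (E_const : ℝ)
    (b_s b p s : ℝ → ℝ) (t : ℝ)
    (hbs : HasDerivAt b_s (E_const - R_s * (b_s t / L_s)) t)
    (hb : HasDerivAt b (E_const - b_s t * (p t / J_r) - R_r * (b t / L_r)) t)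
    (hp : HasDerivAt p (b_s t * (b t / L_r) - d_r * (p t / J_r)) t)
    (hs : HasDerivAt s ((1 / θ₀) * (R_s * (b_s t / L_s)^2 + R_r * (b t / L_r)^2
        + d_r * (p t / J_r)^2)) t) :
    HasDerivAt (fun τ => b_s τ^2 / (2 * L_s) + b τ^2 / (2 * L_r) + p τ^2 / (2 * J_r)
        + θ₀ * s τ)
      (E_const * (b_s t / L_s + b t / L_r)) t ∧
    0 ≤ (1 / θ₀) * (R_s * (b_s t / L_s)^2 + R_r * (b t / L_r)^2 + d_r * (p t / J_r)^2) :=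
  motor_energy_balance_and_entropy_production_general L_s L_r J_r θ₀ hθ₀ R_s R_r d_r hRs hRr hdr
    E_const b_s b p s t hbs hb hp hs
end
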